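/- Let (A,∘,[·,·]) be a Gel'fand-Dorfman bialgebra over K of codimension 1 in a vector space E. Assume the sub-adjacent Lie algebra g(A) (with bracket a∘b − b∘a) is perfect, every quasicentroid of the Novikov algebra (A,∘) is inner, and moreover {b ∈ A : a∘b = 0 for all a ∈ A} = {0}. Then Extd(E,A) is in bijection with the disjoint union (SF2(A)/≈) ⊔ (SF3(A)/≈), where: SF2(A) is the set of GD flag datums with p = q = η = 0, T = 0 and a1 = 0, written (S,k,D), with (S,k,D) ≈ (S',k',D') iff there exists β ∈ K* with S = βS', k = βk' and D = βD'; and SF3(A) is the set of GD flag datums with p = 0, T = 0, k = 0 and q ≠ 0, written (q,S,a1,η,D), with (q,S,a1,η,D) ≈ (q',S',a1',η',D') iff q = q', η = η' and there exists β ∈ K* with S = βS', a1 = β²a1' and D = βD'. -/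

import Mathlib

namespace GDExt

def IsNovikov {M : Type*} [AddCommGroup M] (mul : M → M → M) : Prop :=
  (∀ a b c, mul (mul a b) c - mul a (mul b c) = mul (mul b a) c - mul b (mul a c)) ∧
  ∀ a b c, mul (mul a b) c = mul (mul a c) b

def IsLieBracket {M : Type*} [AddCommGroup M] (br : M → M → M) : Prop :=
  (∀ a, br a a = 0) ∧ ∀ a b c, br a (br b c) = br (br a b) c + br b (br a c)

def IsGD {M : Type*} [AddCommGroup M] (mul br : M → M → M) : Prop :=
  IsNovikov mul ∧ IsLieBracket br ∧
  ∀ a b c, br a (mul b c) - br c (mul b a) + mul (br b a) c - mul (br b c) a - mul b (br a c) = 0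

variable {K : Type*} [Field K]
variable {A V : Type*} [AddCommGroup A] [Module K A] [AddCommGroup V] [Module K V]

/-- First component bilinear product of the unified product `A ♮ V`. -/
def uniMul (circ : A →ₗ[K] A →ₗ[K] A) (lA rA : A →ₗ[K] Module.End K V)
    (lV rV : V →ₗ[K] Module.End K A) (f : V →ₗ[K] V →ₗ[K] A)
    (st : V →ₗ[K] V →ₗ[K] V) : A × V → A × V → A × V :=
  fun p q =>
    (circ p.1 q.1 + lV p.2 q.1 + rV q.2 p.1 + f p.2 q.2,
     st p.2 q.2 + lA p.1 q.2 + rA q.1 p.2)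

/-- Bracket of the unified product `A ♮ V`. -/
def uniBr (brk : A →ₗ[K] A →ₗ[K] A) (tl : V →ₗ[K] A →ₗ[K] V) (tr : V →ₗ[K] A →ₗ[K] A)
    (hm : V →ₗ[K] V →ₗ[K] A) (vbr : V →ₗ[K] V →ₗ[K] V) : A × V → A × V → A × V :=
  fun p q =>
    (brk p.1 q.1 + tr p.2 q.1 - tr q.2 p.1 + hm p.2 q.2,
     vbr p.2 q.2 + tl p.2 q.1 - tl q.2 p.1)

end GDExt

namespace GDExt

variable (K : Type*) [Field K]
variable (A : Type*) [AddCommGroup A] [Module K A]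

/-- The data of a Gel'fand-Dorfman flag datum. -/
structure FlagData where
  p : A →ₗ[K] K
  q : A →ₗ[K] K
  S : A →ₗ[K] A
  T : A →ₗ[K] A
  a1 : A
  k : K
  eta : A →ₗ[K] K
  D : A →ₗ[K] A

variable {K A}

/-- Conditions (FN1)-(FN10), (TD1)-(TD2) and (GF1)-(GF6) for a GD flag datum of the
GD bialgebra `(A, circ, brk)`. -/
def IsFlagDatum (circ brk : A →ₗ[K] A →ₗ[K] A) (d : FlagData K A) : Prop :=
  -- (FN1)
  (∀ a b : A, d.p (circ a b) = d.p (circ b a)) ∧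
  (∀ a b : A, d.q (circ a b) = d.q a * d.q b) ∧
  -- (FN2)
  (∀ a b : A, d.S (circ a b) = circ (d.S a) b + circ a (d.S b) + (d.q a - d.p a) • d.S b
      + d.q b • d.T a - circ (d.T a) b) ∧
  -- (FN3)
  (∀ a b : A, d.T (circ a b) - d.T (circ b a)
      = d.p b • d.T a - d.p a • d.T b + circ a (d.T b) - circ b (d.T a)) ∧
  -- (FN4)
  (∀ a : A, d.T (d.T a) = d.T (d.S a) - d.S (d.T a) + circ a d.a1
      + (d.q a - 2 * d.p a) • d.a1 + d.k • d.T a) ∧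
  -- (FN5)
  (∀ a : A, d.p (d.S a) - d.p (d.T a) = d.q (d.T a) + d.k * (d.p a - d.q a)) ∧
  -- (FN6)
  (∀ a b : A, circ (d.S a) b + d.q a • d.S b = circ (d.S b) a + d.q b • d.S a) ∧
  -- (FN7)
  (∀ a b : A, d.T (circ a b) = circ (d.T a) b + d.p a • d.S b) ∧
  -- (FN8)
  (∀ a b : A, d.p (circ a b) = d.p a * d.q b) ∧
  -- (FN9)
  (∀ a : A, d.T (d.S a) = circ d.a1 a + d.k • d.S a - d.q a • d.a1) ∧
  -- (FN10)
  (∀ a : A, d.p (d.S a) = 0) ∧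
  -- (TD1)
  (∀ a b : A, d.eta (brk a b) = 0) ∧
  -- (TD2)
  (∀ a b : A, d.D (brk a b) = brk (d.D a) b + brk a (d.D b) + d.eta a • d.D b - d.eta b • d.D a) ∧
  -- (GF1)
  (∀ a b : A, brk a (d.T b) - d.p b • d.D a - d.D (circ b a) + d.T (brk b a)
      + circ (d.D b) a + d.eta b • d.S a + circ b (d.D a) + d.eta a • d.T b = 0) ∧
  -- (GF2)
  (∀ a b : A, d.p (brk b a) + d.eta b * d.q a - d.eta (circ b a) = 0) ∧
  -- (GF3)
  (∀ a b : A, brk a (d.S b) - d.q b • d.D a - brk b (d.S a) + d.q a • d.D b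
      + circ (d.D a) b + d.eta a • d.S b - circ (d.D b) a - d.eta b • d.S a
      - d.S (brk a b) = 0) ∧
  -- (GF4)
  (∀ a b : A, d.q (brk a b) = 0) ∧
  -- (GF5)
  (∀ a : A, brk a d.a1 - d.k • d.D a - d.D (d.S a) + d.T (d.D a)
      + (2 * d.eta a) • d.a1 + d.S (d.D a) = 0) ∧
  -- (GF6)
  (∀ a : A, d.k * d.eta a - d.eta (d.S a) + d.p (d.D a) + d.q (d.D a) = 0)

end GDExt

namespace GDExt

variable {K E : Type*} [Field K] [AddCommGroup E] [Module K E]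

/-- The GD bialgebra structures on `E` containing the GD bialgebra `(A, circ, brk)`
as a subalgebra (i.e. restricting to the given operations on `A`). -/
def GDStrOn (A : Submodule K E) (circ brk : ↥A →ₗ[K] ↥A →ₗ[K] ↥A) : Type _ :=
  {s : (E →ₗ[K] E →ₗ[K] E) × (E →ₗ[K] E →ₗ[K] E) //
    IsGD (fun u v => s.1 u v) (fun u v => s.2 u v) ∧
    ∀ a b : ↥A, s.1 a b = ((circ a b : ↥A) : E) ∧ s.2 a b = ((brk a b : ↥A) : E)}

/-- Equivalence of GD bialgebra structures on `E` containing `A` as a subalgebra: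
there is a GD bialgebra isomorphism whose restriction to `A` is the identity. -/
def GDStrEquiv (A : Submodule K E) (circ brk : ↥A →ₗ[K] ↥A →ₗ[K] ↥A)
    (s s' : GDStrOn A circ brk) : Prop :=
  ∃ φ : E ≃ₗ[K] E,
    (∀ u v : E, φ (s.1.1 u v) = s'.1.1 (φ u) (φ v)) ∧
    (∀ u v : E, φ (s.1.2 u v) = s'.1.2 (φ u) (φ v)) ∧
    (∀ a : ↥A, φ (a : E) = (a : E))

end GDExt

/-!
Write `E = A ⊕ K x` as `A × K` with `x = (0, 1)`. A GD structure on `E` extending `A` is then the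
unified product of its flag datum, read off from `a ∘ x`, `x ∘ a`, `x ∘ x` and `[x, a]`. Since
`g(A)` is perfect, every linear functional on `A` which is multiplicative, or which vanishes on
products, is zero; this gives `q = p = η = 0`, and in particular `SF3(A)` is empty. Now `T` is a
quasicentroid, say `T = (· ∘ b0)`, and replacing `x` by `x - b0` makes `T = 0`; then `a ∘ a1 = 0`
for all `a`, so `a1 = 0`, and every extension is equivalent to one coming from an SF2 datum.
Finally, an isomorphism fixing `A` maps `x` to `c + β x` with `β ≠ 0`; comparing `a ∘ x` gives
`a ∘ c = 0`, so `c = 0`, and comparing `x ∘ a`, `x ∘ x`, `[x, a]` gives exactly the relation `≈`.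
-/

namespace GDExt

lemma nonempty_quot_equiv_of_rel_iff {α β : Type*} {r : α → α → Prop} {s : β → β → Prop}
    (hs : Equivalence s) (F : α → β) (hF : ∀ a a', r a a' ↔ s (F a) (F a'))
    (hsurj : ∀ b, ∃ a, s (F a) b) : Nonempty (Quot r ≃ Quot s) := by
  refine ⟨Equiv.ofBijective (Quot.lift (fun a => Quot.mk s (F a))
    fun a a' h => Quot.sound ((hF a a').mp h)) ⟨?_, ?_⟩⟩
  · rintro ⟨a⟩ ⟨a'⟩ h
    exact Quot.sound ((hF a a').mpr (hs.eqvGen_iff.mp (Quot.eq.mp h)))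
  · rintro ⟨b⟩
    obtain ⟨a, ha⟩ := hsurj b
    exact ⟨Quot.mk r a, Quot.sound ha⟩

lemma eq_zero_of_perfect {K M V : Type*} [CommRing K] [AddCommGroup M] [Module K M]
    [AddCommGroup V] [Module K V] {circ : M →ₗ[K] M →ₗ[K] M}
    (hperf : Submodule.span K {c : M | ∃ a b : M, c = circ a b - circ b a} = ⊤)
    (f : M →ₗ[K] V) (hf : ∀ a b, f (circ a b) = f (circ b a)) : f = 0 := by
  refine LinearMap.ker_eq_top.mp (top_le_iff.mp (hperf ▸ Submodule.span_le.mpr ?_))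
  rintro _ ⟨a, b, rfl⟩
  simp [hf]

section Transport

variable {K M N : Type*} [CommRing K] [AddCommGroup M] [Module K M] [AddCommGroup N] [Module K N]

def Intertwines (φ : M ≃ₗ[K] N) (f : M →ₗ[K] M →ₗ[K] M) (g : N →ₗ[K] N →ₗ[K] N) : Prop :=
  ∀ u v, φ (f u v) = g (φ u) (φ v)

lemma Intertwines.refl (f : M →ₗ[K] M →ₗ[K] M) : Intertwines (LinearEquiv.refl K M) f f :=
  fun _ _ => rfl

lemma Intertwines.symm {φ : M ≃ₗ[K] N} {f : M →ₗ[K] M →ₗ[K] M} {g : N →ₗ[K] N →ₗ[K] N}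
    (h : Intertwines φ f g) : Intertwines φ.symm g f := fun u v => by
  rw [φ.symm_apply_eq, h, φ.apply_symm_apply, φ.apply_symm_apply]

lemma Intertwines.trans {P : Type*} [AddCommGroup P] [Module K P] {φ : M ≃ₗ[K] N}
    {ψ : N ≃ₗ[K] P} {f : M →ₗ[K] M →ₗ[K] M} {g : N →ₗ[K] N →ₗ[K] N} {h : P →ₗ[K] P →ₗ[K] P}
    (hφ : Intertwines φ f g) (hψ : Intertwines ψ g h) : Intertwines (φ.trans ψ) f h :=
  fun u v => by simp only [LinearEquiv.trans_apply, hφ u v, hψ (φ u)]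

def transportBilin (e : M ≃ₗ[K] N) : (M →ₗ[K] M →ₗ[K] M) ≃ₗ[K] (N →ₗ[K] N →ₗ[K] N) :=
  e.arrowCongr (e.arrowCongr e)

lemma transportBilin_apply (e : M ≃ₗ[K] N) (f : M →ₗ[K] M →ₗ[K] M) (u v : N) :
    transportBilin e f u v = e (f (e.symm u) (e.symm v)) := rfl

lemma intertwines_transportBilin (e : M ≃ₗ[K] N) (f : M →ₗ[K] M →ₗ[K] M) :
    Intertwines e f (transportBilin e f) := fun u v => by
  simp only [transportBilin_apply, LinearEquiv.symm_apply_apply]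

lemma transportBilin_transportBilin_symm (e : M ≃ₗ[K] N) (f : N →ₗ[K] N →ₗ[K] N) :
    transportBilin e (transportBilin e.symm f) = f := by
  ext u v
  simp [transportBilin_apply]

lemma IsGD.of_intertwines {φ : M ≃ₗ[K] N} {f g : M →ₗ[K] M →ₗ[K] M}
    {f' g' : N →ₗ[K] N →ₗ[K] N} (hf : Intertwines φ f f') (hg : Intertwines φ g g')
    (h : IsGD (fun u v => f u v) (fun u v => g u v)) :
    IsGD (fun u v => f' u v) (fun u v => g' u v) := by
  have hf' : ∀ u v, f' u v = φ (f (φ.symm u) (φ.symm v)) := fun u v => by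
    rw [hf, φ.apply_symm_apply, φ.apply_symm_apply]
  have hg' : ∀ u v, g' u v = φ (g (φ.symm u) (φ.symm v)) := fun u v => by
    rw [hg, φ.apply_symm_apply, φ.apply_symm_apply]
  obtain ⟨⟨hN1, hN2⟩, ⟨hJ0, hJac⟩, hC⟩ := h
  refine ⟨⟨fun a b c => ?_, fun a b c => ?_⟩, ⟨fun a => ?_, fun a b c => ?_⟩, fun a b c => ?_⟩ <;>
    simp only [hf', hg', LinearEquiv.symm_apply_apply, ← map_sub, ← map_add,
      EmbeddingLike.apply_eq_iff_eq, LinearEquiv.map_eq_zero_iff]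
  exacts [hN1 _ _ _, hN2 _ _ _, hJ0 _, hJac _ _ _, hC _ _ _]

end Transport

section Unified

variable {K M : Type*} [Field K] [AddCommGroup M] [Module K M]

/-- The unified product of a flag datum on `M × K`, with `x = (0, 1)`:
`a ∘ x = (T a, p a)`, `x ∘ a = (S a, q a)`, `x ∘ x = (a1, k)`; likewise `[x, a] = (D a, η a)`
in `unifiedBr`. -/
def unifiedMul (circ : M →ₗ[K] M →ₗ[K] M) (d : FlagData K M) :
    M × K →ₗ[K] M × K →ₗ[K] M × K :=
  LinearMap.mk₂ K
    (fun u v => (circ u.1 v.1 + u.2 • d.S v.1 + v.2 • d.T u.1 + (u.2 * v.2) • d.a1,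
      v.2 * d.p u.1 + u.2 * d.q v.1 + u.2 * v.2 * d.k))
    (fun _ _ _ => Prod.ext (by simp; module) (by simp; ring))
    (fun _ _ _ => Prod.ext (by simp; module) (by simp; ring))
    (fun _ _ _ => Prod.ext (by simp; module) (by simp; ring))
    (fun _ _ _ => Prod.ext (by simp; module) (by simp; ring))

def unifiedBr (brk : M →ₗ[K] M →ₗ[K] M) (d : FlagData K M) :
    M × K →ₗ[K] M × K →ₗ[K] M × K :=
  LinearMap.mk₂ K
    (fun u v => (brk u.1 v.1 + u.2 • d.D v.1 - v.2 • d.D u.1, u.2 * d.eta v.1 - v.2 * d.eta u.1))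
    (fun _ _ _ => Prod.ext (by simp; module) (by simp; ring))
    (fun _ _ _ => Prod.ext (by simp; module) (by simp; ring))
    (fun _ _ _ => Prod.ext (by simp; module) (by simp; ring))
    (fun _ _ _ => Prod.ext (by simp; module) (by simp; ring))

@[simp] lemma unifiedMul_apply (circ : M →ₗ[K] M →ₗ[K] M) (d : FlagData K M) (a b : M) (α γ : K) :
    unifiedMul circ d (a, α) (b, γ) = (circ a b + α • d.S b + γ • d.T a + (α * γ) • d.a1,
      γ * d.p a + α * d.q b + α * γ * d.k) := rfl

@[simp] lemma unifiedBr_apply (brk : M →ₗ[K] M →ₗ[K] M) (d : FlagData K M) (a b : M) (α γ : K) :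
    unifiedBr brk d (a, α) (b, γ) = (brk a b + α • d.D b - γ • d.D a, α * d.eta b - γ * d.eta a) :=
  rfl

def IsGDUnified (circ brk : M →ₗ[K] M →ₗ[K] M) (d : FlagData K M) : Prop :=
  IsGD (fun u v => unifiedMul circ d u v) (fun u v => unifiedBr brk d u v)

variable {circ brk : M →ₗ[K] M →ₗ[K] M} {d : FlagData K M}

lemma IsGDUnified.q_circ (h : IsGDUnified circ brk d) (a b : M) :
    d.q (circ a b) = d.q a * d.q b := by
  have := h.1.1 (0, 1) (a, 0) (b, 0)
  simp only [unifiedMul_apply, map_zero, LinearMap.zero_apply, one_smul, zero_add, smul_zero,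
      add_zero, mul_zero, zero_smul, one_mul, zero_mul, Prod.mk_sub_mk, mul_one,
      Prod.mk.injEq] at this
  linear_combination -this.2

lemma IsGDUnified.p_circ (h : IsGDUnified circ brk d) (a b : M) :
    d.p (circ a b) = d.p a * d.q b := by
  have := h.1.2 (a, 0) (b, 0) (0, 1)
  simp only [unifiedMul_apply, zero_smul, add_zero, mul_zero, zero_mul, map_zero, smul_zero,
      one_smul, zero_add, mul_one, one_mul, Prod.mk.injEq] at this
  exact this.2

lemma IsGDUnified.eta_circ (h : IsGDUnified circ brk d) (a b : M) :
    d.p (brk b a) + d.eta b * d.q a - d.eta (circ b a) = 0 := by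
  have := h.2.2 (0, 1) (b, 0) (a, 0)
  simp only [unifiedMul_apply, zero_smul, add_zero, mul_zero, zero_mul, unifiedBr_apply, map_zero,
      LinearMap.zero_apply, one_smul, zero_add, smul_zero, sub_zero, one_mul, mul_one, zero_sub,
      Prod.mk_sub_mk, sub_neg_eq_add, map_neg, LinearMap.neg_apply, neg_smul, smul_neg, neg_zero,
      mul_neg, neg_mul, Prod.mk_add_mk, sub_self, Prod.mk_eq_zero] at this
  linear_combination -this.2

lemma IsGDUnified.T_circ (h : IsGDUnified circ brk d) (a b : M) :
    d.T (circ a b) = circ (d.T a) b + d.p a • d.S b := by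
  have := h.1.2 (a, 0) (b, 0) (0, 1)
  simp only [unifiedMul_apply, zero_smul, add_zero, mul_zero, zero_mul, map_zero, smul_zero,
      one_smul, zero_add, mul_one, one_mul, Prod.mk.injEq] at this
  exact this.1

lemma IsGDUnified.T_circ_sub_T_circ (h : IsGDUnified circ brk d) (a b : M) :
    d.T (circ a b) - d.T (circ b a)
      = d.p b • d.T a - d.p a • d.T b + circ a (d.T b) - circ b (d.T a) := by
  have := h.1.1 (a, 0) (b, 0) (0, 1)
  simp only [unifiedMul_apply, zero_smul, add_zero, mul_zero, zero_mul, map_zero, smul_zero,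
      one_smul, zero_add, mul_one, one_mul, Prod.mk_sub_mk, Prod.mk.injEq] at this
  linear_combination (norm := module) this.1

lemma IsGDUnified.T_T (h : IsGDUnified circ brk d) (a : M) :
    d.T (d.T a) = d.T (d.S a) - d.S (d.T a) + circ a d.a1 + (d.q a - 2 * d.p a) • d.a1
      + d.k • d.T a := by
  have := h.1.1 (a, 0) (0, 1) (0, 1)
  simp only [unifiedMul_apply, map_zero, smul_zero, add_zero, one_smul, zero_add, mul_one,
      zero_smul, one_mul, mul_zero, zero_mul, LinearMap.zero_apply, Prod.mk_sub_mk,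
      Prod.mk.injEq] at this
  linear_combination (norm := module) this.1

def IsQuasicentroid (circ : M →ₗ[K] M →ₗ[K] M) (T : M →ₗ[K] M) : Prop :=
  (∀ a b, T (circ a b) = circ (T a) b) ∧
    ∀ a b, T (circ a b) - T (circ b a) = circ a (T b) - circ b (T a)

section Perfect

variable (hperf : Submodule.span K {c : M | ∃ a b : M, c = circ a b - circ b a} = ⊤)
include hperf

lemma IsGDUnified.q_eq_zero (h : IsGDUnified circ brk d) : d.q = 0 :=
  eq_zero_of_perfect hperf d.q fun a b => by rw [h.q_circ, h.q_circ, mul_comm]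

lemma IsGDUnified.p_eq_zero (h : IsGDUnified circ brk d) : d.p = 0 :=
  eq_zero_of_perfect hperf d.p fun a b => by simp [h.p_circ, h.q_eq_zero hperf]

lemma IsGDUnified.eta_eq_zero (h : IsGDUnified circ brk d) : d.eta = 0 :=
  eq_zero_of_perfect hperf d.eta fun a b => by
    have hab := h.eta_circ b a
    have hba := h.eta_circ a b
    simp only [h.p_eq_zero hperf, h.q_eq_zero hperf, LinearMap.zero_apply, mul_zero,
      add_zero, zero_sub, neg_eq_zero] at hab hba
    rw [hab, hba]

lemma IsGDUnified.exists_T_eq_circ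
    (hqc : ∀ T : M →ₗ[K] M, IsQuasicentroid circ T → ∃ b0 : M, ∀ a : M, T a = circ a b0)
    (h : IsGDUnified circ brk d) : ∃ b0 : M, ∀ a : M, d.T a = circ a b0 :=
  hqc d.T ⟨fun a b => by simpa [h.p_eq_zero hperf] using h.T_circ a b,
    fun a b => by simpa [h.p_eq_zero hperf] using h.T_circ_sub_T_circ a b⟩

lemma IsGDUnified.a1_eq_zero (hann : ∀ b : M, (∀ a : M, circ a b = 0) → b = 0)
    (h : IsGDUnified circ brk d) (hT : d.T = 0) : d.a1 = 0 :=
  hann _ fun a => by simpa [hT, h.p_eq_zero hperf, h.q_eq_zero hperf] using (h.T_T a).symm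

end Perfect

end Unified

section SF2

variable {K M : Type*} [Field K] [AddCommGroup M] [Module K M]
variable {circ brk : M →ₗ[K] M →ₗ[K] M}

def FlagData.IsSF2 (d : FlagData K M) : Prop :=
  d.p = 0 ∧ d.q = 0 ∧ d.eta = 0 ∧ d.T = 0 ∧ d.a1 = 0

/-- Conditions (FN1)–(GF6) for a flag datum with `p = q = η = T = a1 = 0`, the trivial ones
dropped. -/
structure IsSF2Datum (circ brk : M →ₗ[K] M →ₗ[K] M) (S D : M →ₗ[K] M) (k : K) : Prop where
  S_circ : ∀ a b, S (circ a b) = circ (S a) b + circ a (S b)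
  circ_S_comm : ∀ a b, circ (S a) b = circ (S b) a
  smul_S : ∀ a, k • S a = 0
  D_brk : ∀ a b, D (brk a b) = brk (D a) b + brk a (D b)
  D_circ : ∀ a b, D (circ a b) = circ (D a) b + circ a (D b)
  brk_S : ∀ a b, brk a (S b) - brk b (S a) + circ (D a) b - circ (D b) a - S (brk a b) = 0
  D_S : ∀ a, D (S a) = S (D a) - k • D a

lemma isFlagDatum_iff_isSF2Datum {d : FlagData K M} (hd : d.IsSF2) :
    IsFlagDatum circ brk d ↔ IsSF2Datum circ brk d.S d.D d.k := by
  obtain ⟨p, q, S, T, a1, k, eta, D⟩ := d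
  obtain ⟨rfl, rfl, rfl, rfl, rfl⟩ := hd
  constructor
  · rintro ⟨-, -, fn2, -, -, -, fn6, -, -, fn9, -, -, td2, gf1, -, gf3, -, gf5, -⟩
    refine ⟨fun a b => ?_, fun a b => ?_, fun a => ?_, fun a b => ?_, fun a b => ?_,
      fun a b => ?_, fun a => ?_⟩
    · simpa using fn2 a b
    · simpa using fn6 a b
    · simpa using (fn9 a).symm
    · simpa using td2 a b
    · have := gf1 b a
      simp only [LinearMap.zero_apply, map_zero, zero_smul, sub_self, zero_sub, add_zero, smul_zero]
          at this
      linear_combination (norm := module) -this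
    · simpa using gf3 a b
    · have := gf5 a
      simp only [map_zero, zero_sub, LinearMap.zero_apply, add_zero, mul_zero, smul_zero] at this
      linear_combination (norm := module) -this
  · rintro ⟨hS, hSS, hkS, hDb, hDc, hbS, hDS⟩
    refine ⟨by simp, by simp, fun a b => by simpa using hS a b, by simp, by simp, by simp,
      fun a b => by simpa using hSS a b, by simp, by simp, fun a => by simpa using (hkS a).symm,
      by simp, by simp, fun a b => by simpa using hDb a b, fun a b => ?_, by simp,
      fun a b => by simpa using hbS a b, by simp, fun a => ?_, by simp⟩
    · simp [hDc]
    · simp only [LinearMap.zero_apply, map_zero, mul_zero, zero_sub, add_zero, zero_smul, hDS]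
      abel

lemma IsGDUnified.isSF2Datum {d : FlagData K M} (hd : d.IsSF2) (h : IsGDUnified circ brk d) :
    IsSF2Datum circ brk d.S d.D d.k := by
  obtain ⟨p, q, S, T, a1, k, eta, D⟩ := d
  obtain ⟨rfl, rfl, rfl, rfl, rfl⟩ := hd
  obtain ⟨⟨hN1, hN2⟩, ⟨-, hJac⟩, hC⟩ := h
  refine ⟨fun a b => ?_, fun a b => ?_, fun a => ?_, fun a b => ?_, fun a b => ?_,
      fun a b => ?_, fun a => ?_⟩ <;> dsimp only
  · have := hN1 (0, 1) (a, 0) (b, 0)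
    simp only [unifiedMul_apply, map_zero, LinearMap.zero_apply, one_smul, zero_add, smul_zero,
        add_zero, mul_zero, zero_mul, zero_smul, Prod.mk_sub_mk, sub_self, mul_one, zero_sub,
        Prod.mk.injEq, and_true] at this
    linear_combination (norm := module) -this
  · simpa using hN2 (0, 1) (a, 0) (b, 0)
  · exact smul_eq_zero.mpr (by simpa using hN2 (0, 1) (0, 1) (a, 0))
  · simpa using hJac (0, 1) (a, 0) (b, 0)
  · have := hC (0, 1) (a, 0) (b, 0)
    simp only [unifiedMul_apply, zero_smul, add_zero, LinearMap.zero_apply, smul_zero, mul_zero,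
        zero_mul, unifiedBr_apply, map_zero, one_smul, zero_add, sub_zero, sub_self, mul_one,
        Prod.mk_sub_mk, zero_sub, map_neg, LinearMap.neg_apply, Prod.mk_add_mk, Prod.mk_eq_zero,
        and_true] at this
    linear_combination (norm := module) this
  · simpa using hC (a, 0) (0, 1) (b, 0)
  · have := hC (0, 1) (0, 1) (a, 0)
    simp only [unifiedMul_apply, map_zero, LinearMap.zero_apply, one_smul, zero_add, smul_zero,
        add_zero, mul_zero, zero_mul, unifiedBr_apply, sub_zero, sub_self, mul_one, one_mul,
        zero_sub, Prod.mk_sub_mk, sub_neg_eq_add, zero_smul, Prod.mk_add_mk, Prod.mk_eq_zero,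
        and_true] at this
    linear_combination (norm := module) this

lemma IsSF2Datum.isGDUnified (hGD : IsGD (fun a b => circ a b) (fun a b => brk a b))
    {d : FlagData K M} (hd : d.IsSF2) (h : IsSF2Datum circ brk d.S d.D d.k) :
    IsGDUnified circ brk d := by
  obtain ⟨p, q, S, T, a1, k, eta, D⟩ := d
  obtain ⟨rfl, rfl, rfl, rfl, rfl⟩ := hd
  obtain ⟨hS, hSS, hkS, hDb, hDc, hbS, hDS⟩ := h
  obtain ⟨⟨hN1, hN2⟩, ⟨hJ0, hJac⟩, hC⟩ := hGD
  refine ⟨⟨?_, ?_⟩, ⟨?_, ?_⟩, ?_⟩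
  · rintro ⟨a, α⟩ ⟨b, β⟩ ⟨c, γ⟩
    ext
    · simp only [unifiedMul_apply, LinearMap.zero_apply, smul_zero, add_zero, mul_zero, zero_add,
          map_add, map_smul, LinearMap.add_apply, LinearMap.smul_apply, smul_add, Prod.mk_sub_mk]
      linear_combination (norm := module) hN1 a b c + β • hS a c - α • hS b c
    · simp only [unifiedMul_apply, Prod.snd_sub, LinearMap.zero_apply]
      ring
  · rintro ⟨a, α⟩ ⟨b, β⟩ ⟨c, γ⟩
    ext
    · simp only [unifiedMul_apply, LinearMap.zero_apply, smul_zero, add_zero, mul_zero, zero_add,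
          map_add, map_smul, LinearMap.add_apply, LinearMap.smul_apply]
      linear_combination (norm := module)
        hN2 a b c + α • hSS b c + (α * β) • hkS c - (α * γ) • hkS b
    · simp only [unifiedMul_apply, LinearMap.zero_apply]
      ring
  · rintro ⟨a, α⟩
    simp [hJ0]
  · rintro ⟨a, α⟩ ⟨b, β⟩ ⟨c, γ⟩
    ext
    · simp only [unifiedBr_apply, LinearMap.zero_apply, mul_zero, sub_self, map_sub, map_add,
        map_smul, zero_smul, sub_zero, smul_eq_mul, add_zero, LinearMap.sub_apply,
        LinearMap.add_apply, LinearMap.smul_apply, Prod.mk_add_mk]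
      linear_combination (norm := module) hJac a b c + α • hDb b c - β • hDb a c
        + γ • hDb a b - γ • LinearMap.IsAlt.neg (B := brk) hJ0 (D a) b
    · simp
  · rintro ⟨a, α⟩ ⟨b, β⟩ ⟨c, γ⟩
    simp only [unifiedMul_apply, LinearMap.zero_apply, smul_zero, add_zero, mul_zero, zero_add,
        unifiedBr_apply, map_add, map_smul, smul_add, sub_self, Prod.mk_sub_mk, map_sub,
        LinearMap.sub_apply, LinearMap.add_apply, LinearMap.smul_apply, zero_smul, zero_mul,
        Prod.mk_add_mk, Prod.mk_eq_zero, and_true]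
    linear_combination (norm := module) hC a b c + β • hbS a c + α • hDc b c - γ • hDc b a
      + (α * β) • hDS c - (β * γ) • hDS a

lemma isFlagDatum_iff_isGDUnified (hGD : IsGD (fun a b => circ a b) (fun a b => brk a b))
    {d : FlagData K M} (hd : d.IsSF2) : IsFlagDatum circ brk d ↔ IsGDUnified circ brk d :=
  (isFlagDatum_iff_isSF2Datum hd).trans ⟨IsSF2Datum.isGDUnified hGD hd, IsGDUnified.isSF2Datum hd⟩

lemma IsFlagDatum.q_eq_zero
    (hperf : Submodule.span K {c : M | ∃ a b : M, c = circ a b - circ b a} = ⊤)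
    {d : FlagData K M} (hd : IsFlagDatum circ brk d) : d.q = 0 :=
  eq_zero_of_perfect hperf d.q fun a b => by rw [hd.2.1, hd.2.1, mul_comm]

lemma isEmpty_sf3
    (hperf : Submodule.span K {c : M | ∃ a b : M, c = circ a b - circ b a} = ⊤) :
    IsEmpty {d : FlagData K M // IsFlagDatum circ brk d ∧
      d.p = 0 ∧ d.T = 0 ∧ d.k = 0 ∧ d.q ≠ 0} :=
  ⟨fun ⟨_, hd, _, _, _, hq⟩ => hq (hd.q_eq_zero hperf)⟩

end SF2

section Extension

variable {K M : Type*} [Field K] [AddCommGroup M] [Module K M]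
variable {circ brk : M →ₗ[K] M →ₗ[K] M} {m br : M × K →ₗ[K] M × K →ₗ[K] M × K}

structure IsGDExtension (circ brk : M →ₗ[K] M →ₗ[K] M)
    (m br : M × K →ₗ[K] M × K →ₗ[K] M × K) : Prop where
  isGD : IsGD (fun u v => m u v) (fun u v => br u v)
  mul_inl : ∀ a b, m (a, 0) (b, 0) = (circ a b, 0)
  br_inl : ∀ a b, br (a, 0) (b, 0) = (brk a b, 0)

def flagDatumOf (m br : M × K →ₗ[K] M × K →ₗ[K] M × K) : FlagData K M where
  p := LinearMap.snd K M K ∘ₗ m.flip (0, 1) ∘ₗ LinearMap.inl K M K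
  q := LinearMap.snd K M K ∘ₗ m (0, 1) ∘ₗ LinearMap.inl K M K
  S := LinearMap.fst K M K ∘ₗ m (0, 1) ∘ₗ LinearMap.inl K M K
  T := LinearMap.fst K M K ∘ₗ m.flip (0, 1) ∘ₗ LinearMap.inl K M K
  a1 := (m (0, 1) (0, 1)).1
  k := (m (0, 1) (0, 1)).2
  eta := LinearMap.snd K M K ∘ₗ br (0, 1) ∘ₗ LinearMap.inl K M K
  D := LinearMap.fst K M K ∘ₗ br (0, 1) ∘ₗ LinearMap.inl K M K

lemma pair_eq_inl_add_smul (a : M) (α : K) : ((a, α) : M × K) = (a, 0) + α • (0, 1) := by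
  ext <;> simp

lemma IsGDExtension.eq_unifiedMul (h : IsGDExtension circ brk m br) :
    m = unifiedMul circ (flagDatumOf m br) := by
  refine LinearMap.ext fun ⟨a, α⟩ => LinearMap.ext fun ⟨b, γ⟩ => ?_
  conv_lhs => rw [pair_eq_inl_add_smul a, pair_eq_inl_add_smul b]
  simp only [map_add, map_smul, LinearMap.add_apply, LinearMap.smul_apply, h.mul_inl]
  ext
  · simp only [smul_add, Prod.fst_add, Prod.smul_fst, flagDatumOf, unifiedMul_apply,
        LinearMap.coe_comp, LinearMap.coe_fst, LinearMap.coe_inl, Function.comp_apply,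
        LinearMap.flip_apply, LinearMap.coe_snd]
    module
  · simp only [smul_add, Prod.snd_add, Prod.smul_snd, smul_eq_mul, zero_add, flagDatumOf,
        unifiedMul_apply, LinearMap.coe_comp, LinearMap.coe_fst, LinearMap.coe_inl,
        Function.comp_apply, LinearMap.flip_apply, LinearMap.coe_snd]
    ring

lemma IsGDExtension.eq_unifiedBr (h : IsGDExtension circ brk m br) :
    br = unifiedBr brk (flagDatumOf m br) := by
  refine LinearMap.ext fun ⟨a, α⟩ => LinearMap.ext fun ⟨b, γ⟩ => ?_
  conv_lhs => rw [pair_eq_inl_add_smul a, pair_eq_inl_add_smul b]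
  simp only [map_add, map_smul, LinearMap.add_apply, LinearMap.smul_apply, h.br_inl,
    ← LinearMap.IsAlt.neg (B := br) h.isGD.2.1.1 (0, 1) (a, 0), h.isGD.2.1.1]
  ext
  · simp only [smul_zero, add_zero, smul_neg, Prod.fst_add, Prod.smul_fst, Prod.fst_neg,
        flagDatumOf, unifiedBr_apply, LinearMap.coe_comp, LinearMap.coe_fst, LinearMap.coe_inl,
        Function.comp_apply, LinearMap.coe_snd]
    module
  · simp only [smul_zero, add_zero, smul_neg, Prod.snd_add, Prod.smul_snd, smul_eq_mul, zero_add,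
        Prod.snd_neg, flagDatumOf, unifiedBr_apply, LinearMap.coe_comp, LinearMap.coe_fst,
        LinearMap.coe_inl, Function.comp_apply, LinearMap.coe_snd]
    ring

lemma IsGDUnified.isGDExtension {d : FlagData K M} (h : IsGDUnified circ brk d) :
    IsGDExtension circ brk (unifiedMul circ d) (unifiedBr brk d) :=
  ⟨h, fun a b => by simp, fun a b => by simp⟩

lemma IsGDExtension.isGDUnified (h : IsGDExtension circ brk m br) :
    IsGDUnified circ brk (flagDatumOf m br) := by
  have hGD := h.isGD
  rwa [h.eq_unifiedMul, h.eq_unifiedBr] at hGD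

lemma IsGDExtension.transport (h : IsGDExtension circ brk m br) (ψ : (M × K) ≃ₗ[K] M × K)
    (hψ : ∀ a, ψ (a, 0) = (a, 0)) :
    IsGDExtension circ brk (transportBilin ψ m) (transportBilin ψ br) where
  isGD := h.isGD.of_intertwines (intertwines_transportBilin ψ m)
    (intertwines_transportBilin ψ br)
  mul_inl a b := by
    rw [transportBilin_apply, ψ.symm_apply_eq.mpr (hψ a).symm, ψ.symm_apply_eq.mpr (hψ b).symm,
      h.mul_inl, hψ]
  br_inl a b := by
    rw [transportBilin_apply, ψ.symm_apply_eq.mpr (hψ a).symm, ψ.symm_apply_eq.mpr (hψ b).symm,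
      h.br_inl, hψ]

def ExtEquiv (m br m' br' : M × K →ₗ[K] M × K →ₗ[K] M × K) : Prop :=
  ∃ ψ : (M × K) ≃ₗ[K] M × K, (∀ a, ψ (a, 0) = (a, 0)) ∧ Intertwines ψ m m' ∧ Intertwines ψ br br'

theorem IsGDExtension.exists_sf2
    (hperf : Submodule.span K {c : M | ∃ a b : M, c = circ a b - circ b a} = ⊤)
    (hqc : ∀ T : M →ₗ[K] M, IsQuasicentroid circ T → ∃ b0 : M, ∀ a : M, T a = circ a b0)
    (hann : ∀ b : M, (∀ a : M, circ a b = 0) → b = 0) (h : IsGDExtension circ brk m br) :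
    ∃ d : FlagData K M, IsFlagDatum circ brk d ∧ d.IsSF2 ∧
      ExtEquiv (unifiedMul circ d) (unifiedBr brk d) m br := by
  obtain ⟨b0, hb0⟩ := h.isGDUnified.exists_T_eq_circ hperf hqc
  let ψ : (M × K) ≃ₗ[K] M × K :=
    LinearEquiv.transvection (f := LinearMap.snd K M K) (v := (-b0, 0)) rfl
  have hψ : ∀ a, ψ (a, 0) = (a, 0) := fun a =>
    (LinearEquiv.transvection.apply _ _).trans (by simp)
  have hψx : ψ (0, 1) = (-b0, 1) := (LinearEquiv.transvection.apply _ _).trans (by simp)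
  have hmx : ∀ a, m (a, 0) (-b0, 1) = 0 := fun a => by
    rw [h.eq_unifiedMul]
    simp [hb0, h.isGDUnified.p_eq_zero hperf]
  have hψ' : ∀ a, ψ.symm (a, 0) = (a, 0) := fun a => ψ.symm_apply_eq.mpr (hψ a).symm
  have h' := h.transport ψ.symm hψ'
  set d := flagDatumOf (transportBilin ψ.symm m) (transportBilin ψ.symm br)
  have hU := h'.isGDUnified
  have hT : d.T = 0 := by
    ext a
    simp [d, flagDatumOf, transportBilin_apply, hψ, hψx, hmx]
  have hd : d.IsSF2 := ⟨hU.p_eq_zero hperf, hU.q_eq_zero hperf, hU.eta_eq_zero hperf, hT,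
    hU.a1_eq_zero hperf hann hT⟩
  refine ⟨d, (isFlagDatum_iff_isSF2Datum hd).mpr (hU.isSF2Datum hd), hd, ψ, hψ, ?_, ?_⟩
  · rw [← h'.eq_unifiedMul]
    exact (intertwines_transportBilin ψ.symm m).symm
  · rw [← h'.eq_unifiedBr]
    exact (intertwines_transportBilin ψ.symm br).symm

lemma ExtEquiv.exists_smul (hann : ∀ b : M, (∀ a : M, circ a b = 0) → b = 0)
    {d d' : FlagData K M} (hd : d.IsSF2) (hd' : d'.IsSF2)
    (h : ExtEquiv (unifiedMul circ d) (unifiedBr brk d) (unifiedMul circ d') (unifiedBr brk d')) :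
    ∃ β : K, β ≠ 0 ∧ d.S = β • d'.S ∧ d.k = β * d'.k ∧ d.D = β • d'.D := by
  obtain ⟨p, q, S, T, a1, k, eta, D⟩ := d
  obtain ⟨rfl, rfl, rfl, rfl, rfl⟩ := hd
  obtain ⟨p', q', S', T', a1', k', eta', D'⟩ := d'
  obtain ⟨rfl, rfl, rfl, rfl, rfl⟩ := hd'
  obtain ⟨ψ, hψ, hm, hb⟩ := h
  obtain ⟨c, β, hx⟩ : ∃ c β, ψ (0, 1) = (c, β) := ⟨_, _, rfl⟩
  have hψ' : ∀ a α, ψ (a, α) = (a + α • c, α * β) := fun a α => by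
    rw [pair_eq_inl_add_smul, map_add, map_smul, hψ, hx]
    ext <;> simp [mul_comm]
  have hβ : β ≠ 0 := by
    rintro rfl
    have := ψ.injective (hx.trans (hψ c).symm)
    simp at this
  have hc : c = 0 := hann c fun a => by simpa [hψ', eq_comm] using hm (a, 0) (0, 1)
  subst hc
  refine ⟨β, hβ, ?_, ?_, ?_⟩
  · ext a
    simpa [hψ'] using hm (0, 1) (a, 0)
  · have := hm (0, 1) (0, 1)
    simp only [unifiedMul_apply, map_zero, smul_zero, add_zero, mul_one, mul_zero, one_mul,
        zero_add, hψ', Prod.mk.injEq, true_and] at this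
    exact mul_right_cancel₀ hβ (by linear_combination this)
  · ext a
    simpa [hψ'] using hb (0, 1) (a, 0)

lemma extEquiv_of_smul {d d' : FlagData K M} (hd : d.IsSF2) (hd' : d'.IsSF2) {β : K}
    (hβ : β ≠ 0) (hS : d.S = β • d'.S) (hk : d.k = β * d'.k) (hD : d.D = β • d'.D) :
    ExtEquiv (unifiedMul circ d) (unifiedBr brk d) (unifiedMul circ d') (unifiedBr brk d') := by
  obtain ⟨p, q, S, T, a1, k, eta, D⟩ := d
  obtain ⟨rfl, rfl, rfl, rfl, rfl⟩ := hd
  obtain ⟨p', q', S', T', a1', k', eta', D'⟩ := d'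
  obtain ⟨rfl, rfl, rfl, rfl, rfl⟩ := hd'
  dsimp only at hS hk hD
  subst hS hk hD
  refine ⟨(LinearEquiv.refl K M).prodCongr (LinearEquiv.smulOfNeZero K K β hβ), fun a => by simp,
    ?_, ?_⟩
  · rintro ⟨a, α⟩ ⟨b, γ⟩
    ext
    · simp only [unifiedMul_apply, LinearMap.smul_apply, LinearMap.zero_apply, smul_zero, add_zero,
          mul_zero, zero_add, LinearEquiv.prodCongr_apply, LinearEquiv.refl_apply,
          LinearEquiv.smulOfNeZero_apply, smul_eq_mul, add_right_inj]
      module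
    · simp only [unifiedMul_apply, LinearMap.smul_apply, LinearMap.zero_apply, smul_zero, add_zero,
          mul_zero, zero_add, LinearEquiv.prodCongr_apply, LinearEquiv.refl_apply,
          LinearEquiv.smulOfNeZero_apply, smul_eq_mul]
      ring
  · rintro ⟨a, α⟩ ⟨b, γ⟩
    ext
    · simp only [unifiedBr_apply, LinearMap.smul_apply, LinearMap.zero_apply, mul_zero, sub_self,
          LinearEquiv.prodCongr_apply, LinearEquiv.refl_apply, LinearEquiv.smulOfNeZero_apply,
          smul_eq_mul]
      module
    · simp only [unifiedBr_apply, LinearMap.smul_apply, LinearMap.zero_apply, mul_zero, sub_self,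
          LinearEquiv.prodCongr_apply, LinearEquiv.refl_apply, LinearEquiv.smulOfNeZero_apply,
          smul_eq_mul]

theorem extEquiv_unified_iff (hann : ∀ b : M, (∀ a : M, circ a b = 0) → b = 0)
    {d d' : FlagData K M} (hd : d.IsSF2) (hd' : d'.IsSF2) :
    ExtEquiv (unifiedMul circ d) (unifiedBr brk d) (unifiedMul circ d') (unifiedBr brk d') ↔
      ∃ β : K, β ≠ 0 ∧ d.S = β • d'.S ∧ d.k = β * d'.k ∧ d.D = β • d'.D :=
  ⟨ExtEquiv.exists_smul hann hd hd', fun ⟨_, hβ, hS, hk, hD⟩ => extEquiv_of_smul hd hd' hβ hS hk hD⟩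

end Extension

section Coordinates

variable {K E : Type*} [Field K] [AddCommGroup E] [Module K E] {A : Submodule K E}
variable {circ brk : ↥A →ₗ[K] ↥A →ₗ[K] ↥A} {e : (↥A × K) ≃ₗ[K] E}

lemma exists_prodEquiv_of_isCompl {x : E} (hx : x ∉ A) (hc : IsCompl A (K ∙ x)) :
    ∃ e : (↥A × K) ≃ₗ[K] E, ∀ a : ↥A, e (a, 0) = a :=
  ⟨((LinearEquiv.refl K A).prodCongr
      (LinearEquiv.toSpanNonzeroSingleton K E x fun h => hx (h ▸ A.zero_mem))).trans
    (Submodule.prodEquivOfIsCompl A _ hc), fun a => by simp⟩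

lemma gdStrEquiv_equivalence (A : Submodule K E) (circ brk : ↥A →ₗ[K] ↥A →ₗ[K] ↥A) :
    Equivalence (GDStrEquiv A circ brk) where
  refl _ := ⟨LinearEquiv.refl K E, Intertwines.refl _, Intertwines.refl _, fun _ => rfl⟩
  symm := fun ⟨φ, hm, hb, hA⟩ =>
    ⟨φ.symm, Intertwines.symm hm, Intertwines.symm hb, fun a => φ.symm_apply_eq.mpr (hA a).symm⟩
  trans := fun ⟨φ, hm, hb, hA⟩ ⟨ψ, hm', hb', hA'⟩ =>
    ⟨φ.trans ψ, Intertwines.trans hm hm', Intertwines.trans hb hb', fun a => by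
      rw [LinearEquiv.trans_apply, hA, hA']⟩

variable {m br : ↥A × K →ₗ[K] ↥A × K →ₗ[K] ↥A × K}

def IsGDExtension.toGDStrOn (he : ∀ a : ↥A, e (a, 0) = a) (h : IsGDExtension circ brk m br) :
    GDStrOn A circ brk :=
  ⟨(transportBilin e m, transportBilin e br),
    h.isGD.of_intertwines (intertwines_transportBilin e m) (intertwines_transportBilin e br),
    fun a b => by
      simp only [transportBilin_apply, e.symm_apply_eq.mpr (he a).symm,
        e.symm_apply_eq.mpr (he b).symm, h.mul_inl, h.br_inl, he, and_self]⟩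

lemma isGDExtension_of_gdStrOn (he : ∀ a : ↥A, e (a, 0) = a) (s : GDStrOn A circ brk) :
    IsGDExtension circ brk (transportBilin e.symm s.1.1) (transportBilin e.symm s.1.2) where
  isGD := s.2.1.of_intertwines (intertwines_transportBilin e.symm _)
    (intertwines_transportBilin e.symm _)
  mul_inl a b := by
    rw [transportBilin_apply, LinearEquiv.symm_symm, he, he, (s.2.2 a b).1]
    exact e.symm_apply_eq.mpr (he _).symm
  br_inl a b := by
    rw [transportBilin_apply, LinearEquiv.symm_symm, he, he, (s.2.2 a b).2]
    exact e.symm_apply_eq.mpr (he _).symm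

lemma toGDStrOn_isGDExtension_of_gdStrOn (he : ∀ a : ↥A, e (a, 0) = a) (s : GDStrOn A circ brk) :
    (isGDExtension_of_gdStrOn he s).toGDStrOn he = s :=
  Subtype.ext (Prod.ext (transportBilin_transportBilin_symm e _)
    (transportBilin_transportBilin_symm e _))

lemma gdStrEquiv_toGDStrOn_iff (he : ∀ a : ↥A, e (a, 0) = a)
    {m' br' : ↥A × K →ₗ[K] ↥A × K →ₗ[K] ↥A × K}
    (h : IsGDExtension circ brk m br) (h' : IsGDExtension circ brk m' br') :
    GDStrEquiv A circ brk (h.toGDStrOn he) (h'.toGDStrOn he) ↔ ExtEquiv m br m' br' := by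
  have he' : ∀ a : ↥A, e.symm a = (a, 0) := fun a => e.symm_apply_eq.mpr (he a).symm
  constructor
  · rintro ⟨φ, hm, hb, hA⟩
    refine ⟨(e.trans φ).trans e.symm, fun a => by simp [he, hA, he'], ?_, ?_⟩
    · exact ((intertwines_transportBilin e m).trans hm).trans
        (intertwines_transportBilin e m').symm
    · exact ((intertwines_transportBilin e br).trans hb).trans
        (intertwines_transportBilin e br').symm
  · rintro ⟨ψ, hψ, hm, hb⟩
    refine ⟨(e.symm.trans ψ).trans e, ?_, ?_, fun a => by simp [he, hψ, he']⟩
    · exact ((intertwines_transportBilin e m).symm.trans hm).trans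
        (intertwines_transportBilin e m')
    · exact ((intertwines_transportBilin e br).symm.trans hb).trans
        (intertwines_transportBilin e br')

end Coordinates

/-- Corollary, part 1, special case: if moreover
`{b | a∘b = 0 for all a} = {0}`, then `Extd(E,A)` is in bijection with
`(SF2(A)/≈) ⊔ (SF3(A)/≈)`. -/
theorem extd_bijection_SF2_SF3
    {K E : Type*} [Field K] [AddCommGroup E] [Module K E]
    (A : Submodule K E) (x : E) (hx : x ∉ A) (hc : IsCompl A (K ∙ x))
    (circ brk : ↥A →ₗ[K] ↥A →ₗ[K] ↥A)
    (hGD : IsGD (fun a b => circ a b) (fun a b => brk a b))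
    (hperf : Submodule.span K {c : ↥A | ∃ a b : ↥A, c = circ a b - circ b a} = ⊤)
    (hqc : ∀ T : ↥A →ₗ[K] ↥A,
      ((∀ a b : ↥A, T (circ a b) = circ (T a) b) ∧
       (∀ a b : ↥A, T (circ a b) - T (circ b a) = circ a (T b) - circ b (T a))) →
      ∃ b0 : ↥A, ∀ a : ↥A, T a = circ a b0)
    -- {b | a ∘ b = 0 for all a} = {0}
    (hann : ∀ b : ↥A, (∀ a : ↥A, circ a b = 0) → b = 0) :
    Nonempty
      ((Quot (fun d d' : {d : FlagData K ↥A // IsFlagDatum circ brk d ∧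
                 d.p = 0 ∧ d.q = 0 ∧ d.eta = 0 ∧ d.T = 0 ∧ d.a1 = 0} =>
          -- equivalence ≈ on SF2(A)
          ∃ β : K, β ≠ 0 ∧ d.1.S = β • d'.1.S ∧ d.1.k = β * d'.1.k ∧ d.1.D = β • d'.1.D)
        ⊕
        Quot (fun d d' : {d : FlagData K ↥A // IsFlagDatum circ brk d ∧
                 d.p = 0 ∧ d.T = 0 ∧ d.k = 0 ∧ d.q ≠ 0} =>
          -- equivalence ≈ on SF3(A)
          d.1.q = d'.1.q ∧ d.1.eta = d'.1.eta ∧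
          ∃ β : K, β ≠ 0 ∧ d.1.S = β • d'.1.S ∧ d.1.a1 = (β * β) • d'.1.a1 ∧
            d.1.D = β • d'.1.D))
      ≃ Quot (GDStrEquiv A circ brk)) := by
  obtain ⟨e, he⟩ := exists_prodEquiv_of_isCompl hx hc
  have := isEmpty_sf3 (brk := brk) hperf
  refine Nonempty.map (Equiv.sumEmpty _ _).trans
    (nonempty_quot_equiv_of_rel_iff (gdStrEquiv_equivalence A circ brk)
      (fun d => ((isFlagDatum_iff_isGDUnified hGD d.2.2).mp d.2.1).isGDExtension.toGDStrOn he)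
      (fun d d' => ?_) fun s => ?_)
  · exact ((gdStrEquiv_toGDStrOn_iff he _ _).trans (extEquiv_unified_iff hann d.2.2 d'.2.2)).symm
  · obtain ⟨d, hd, hsf2, hext⟩ := (isGDExtension_of_gdStrOn he s).exists_sf2 hperf hqc hann
    refine ⟨⟨d, hd, hsf2⟩, ?_⟩
    rw [← toGDStrOn_isGDExtension_of_gdStrOn he s]
    exact (gdStrEquiv_toGDStrOn_iff he _ _).mpr hext

end GDExt
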